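/- Let γ ∈ (−3, 1] and let k > max{3, 3+γ} be real. Then for every η > 0 there exists ε₀ ∈ (0,1) such that for every ε ∈ (0, ε₀) and every v ∈ ℝ³, ∫_{E_ε(v)} |v−v*|^γ ⟨v*⟩^{−k} dv* ≤ η ⟨v⟩^γ, where E_ε(v) := {v* ∈ ℝ³ : |v−v*| > ⟨v⟩/ε or |v−v*| < ε⟨v⟩}. -/

import Mathlib

open MeasureTheory Real
open scoped ENNReal RealInnerProductSpace Classical

noncomputable section

/-- velocity space ℝ³ -/
abbrev E3 : Type := EuclideanSpace ℝ (Fin 3)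

/-- the unit sphere 𝕊² ⊆ ℝ³ -/
abbrev S2 : Type := Metric.sphere (0 : E3) 1

/-- surface measure on the unit sphere -/
noncomputable instance : MeasureSpace S2 := ⟨(volume : Measure E3).toSphere⟩

/-- Japanese bracket ⟨v⟩ = √(1+|v|²). -/
def jap (v : E3) : ℝ := Real.sqrt (1 + ‖v‖ ^ 2)

/-- Post-collision velocity v' = (v+v*)/2 + (|v-v*|/2)σ. -/
def vP (v w : E3) (σ : S2) : E3 := (2⁻¹ : ℝ) • (v + w) + (‖v - w‖ / 2) • (σ : E3)

/-- Post-collision velocity v*' = (v+v*)/2 - (|v-v*|/2)σ. -/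
def vsP (v w : E3) (σ : S2) : E3 := (2⁻¹ : ℝ) • (v + w) - (‖v - w‖ / 2) • (σ : E3)

/-- cos θ = ((v-v*)/|v-v*|)·σ. -/
def cosTheta (v w : E3) (σ : S2) : ℝ := ⟪v - w, (σ : E3)⟫ / ‖v - w‖

/-- sin(θ/2) = √((1-cos θ)/2). -/
def sinHalf (v w : E3) (σ : S2) : ℝ := Real.sqrt ((1 - cosTheta v w σ) / 2)

/-- cos(θ/2) = √((1+cos θ)/2). -/
def cosHalf (v w : E3) (σ : S2) : ℝ := Real.sqrt ((1 + cosTheta v w σ) / 2)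

/-- a fixed reference unit direction, used to express rotation-invariant angular integrals -/
def e1 : E3 := EuclideanSpace.single 0 1

/-- cos θ for the deviation angle of σ relative to the fixed direction `e1` -/
def cos1 (σ : S2) : ℝ := ⟪e1, (σ : E3)⟫

def sinHalf1 (σ : S2) : ℝ := Real.sqrt ((1 - cos1 σ) / 2)

def cosHalf1 (σ : S2) : ℝ := Real.sqrt ((1 + cos1 σ) / 2)

/-- the standard Maxwellian μ(v) = (2π)^{-3/2} e^{-|v|²/2} -/
def maxw (v : E3) : ℝ := (2 * π) ^ (-(3 : ℝ) / 2) * Real.exp (-‖v‖ ^ 2 / 2)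

/-- Grad's angular cutoff assumption (A2): `bf` is measurable, nonnegative,
`K ≤ bf ≤ K⁻¹` on `[0,1]` for some `K > 0`, and `bf` vanishes on negatives. -/
def gradCutoff (bf : ℝ → ℝ) : Prop :=
  Measurable bf ∧ (∀ t, 0 ≤ bf t) ∧
    (∃ K : ℝ, 0 < K ∧ ∀ t ∈ Set.Icc (0 : ℝ) 1, K ≤ bf t ∧ bf t ≤ K⁻¹) ∧
    ∀ t : ℝ, t < 0 → bf t = 0

/-- gain operator Q⁺ -/
def Qgain (γ : ℝ) (bf : ℝ → ℝ) (f g : E3 → ℝ) (v : E3) : ℝ :=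
  ∫ w : E3, ∫ σ : S2, ‖v - w‖ ^ γ * bf (cosTheta v w σ) * (f (vsP v w σ) * g (vP v w σ))

/-- loss operator Q⁻ -/
def Qloss (γ : ℝ) (bf : ℝ → ℝ) (f g : E3 → ℝ) (v : E3) : ℝ :=
  ∫ w : E3, ∫ σ : S2, ‖v - w‖ ^ γ * bf (cosTheta v w σ) * (f w * g v)

/-- the Boltzmann collision operator Q = Q⁺ - Q⁻ -/
def Qcol (γ : ℝ) (bf : ℝ → ℝ) (f g : E3 → ℝ) (v : E3) : ℝ :=
  ∫ w : E3, ∫ σ : S2, ‖v - w‖ ^ γ * bf (cosTheta v w σ) *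
    (f (vsP v w σ) * g (vP v w σ) - f w * g v)

/-- collision frequency ν(v) -/
def nuF (γ : ℝ) (bf : ℝ → ℝ) (v : E3) : ℝ :=
  ∫ w : E3, ∫ σ : S2, ‖v - w‖ ^ γ * bf (cosTheta v w σ) * maxw w

/-- squared weighted norm ‖f‖²_{L²_q} -/
def wSqR (q : ℝ) (f : E3 → ℝ) : ℝ := ∫ v : E3, f v ^ 2 * jap v ^ (2 * q)

/-- weighted norm ‖f‖_{L²_q} -/
def wNorm (q : ℝ) (f : E3 → ℝ) : ℝ := Real.sqrt (wSqR q f)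

/-- squared star norm ‖f‖²_{L²_{k+γ/2,*}} = ∫∫ μ(v*)|v-v*|^γ f(v)² ⟨v⟩^{2k} -/
def starSq (γ k : ℝ) (f : E3 → ℝ) : ℝ :=
  ∫ v : E3, ∫ w : E3, maxw w * ‖v - w‖ ^ γ * f v ^ 2 * jap v ^ (2 * k)

/-- star norm ‖f‖_{L²_{k+γ/2,*}} -/
def starNorm (γ k : ℝ) (f : E3 → ℝ) : ℝ := Real.sqrt (starSq γ k f)

/-- squared exponentially weighted norm ‖f‖²_{L²_{q,a,b}} -/
def expSq (q a b : ℝ) (f : E3 → ℝ) : ℝ :=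
  ∫ v : E3, f v ^ 2 * jap v ^ (2 * q) * Real.exp (2 * a * jap v ^ b)

/-- exponentially weighted norm ‖f‖_{L²_{q,a,b}} -/
def expNorm (q a b : ℝ) (f : E3 → ℝ) : ℝ := Real.sqrt (expSq q a b f)

/-!
Split `E_ε(v)` into the far part `|v - v*| > ⟨v⟩/ε` and the near part `|v - v*| < ε⟨v⟩`, with
`ε ≤ 1/2`. On the far part `⟨v*⟩ ≥ |v - v*|/2`, so for `max γ 0 < s < k - 3` one has
`|v - v*|^γ ⟨v*⟩^(-k) ≤ 2^s |v - v*|^(γ-s) ⟨v*⟩^(s-k) ≤ 2^s ε^(s-γ) ⟨v⟩^γ ⟨v*⟩^(s-k)`,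
and `⟨·⟩^(s-k)` is integrable. On the near part `⟨v*⟩ ≥ ⟨v⟩/2`, and by scaling
`∫_{|u|<ε⟨v⟩} |u|^γ du = (ε⟨v⟩)^(3+γ) ∫_{|u|<1} |u|^γ du`, finite as `γ > -3`; since `k ≥ 3`
the near part is at most `2^k ε^(3+γ) ⟨v⟩^γ ∫_{|u|<1} |u|^γ du`. Both coefficients vanish as
`ε → 0`.
-/

theorem setLIntegral_ball_comp_sub_left {G : Type*} [NormedAddCommGroup G] [MeasurableSpace G]
    [BorelSpace G] (μ : Measure G) [μ.IsAddLeftInvariant] [μ.IsNegInvariant]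
    (f : G → ℝ≥0∞) (v : G) (R : ℝ) :
    ∫⁻ w in Metric.ball v R, f (v - w) ∂μ = ∫⁻ u in Metric.ball 0 R, f u ∂μ := by
  have hball : ∀ w, v - w ∈ Metric.ball 0 R ↔ w ∈ Metric.ball v R := fun w => by
    simp [dist_eq_norm, norm_sub_rev]
  rw [← lintegral_indicator Metric.isOpen_ball.measurableSet,
    ← lintegral_indicator Metric.isOpen_ball.measurableSet,
    ← lintegral_sub_left_eq_self ((Metric.ball 0 R).indicator f) v]
  congr 1 with w
  simp only [Set.indicator, hball]

section NormRpow

variable {E : Type*} [NormedAddCommGroup E] [NormedSpace ℝ E] [FiniteDimensional ℝ E]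
  [MeasurableSpace E] [BorelSpace E] (μ : Measure E) [μ.IsAddHaarMeasure]

theorem setIntegral_ball_norm_rpow (γ : ℝ) {R : ℝ} (hR : 0 < R) :
    ∫ x in Metric.ball 0 R, ‖x‖ ^ γ ∂μ =
      R ^ (Module.finrank ℝ E + γ) * ∫ x in Metric.ball 0 1, ‖x‖ ^ γ ∂μ := by
  have h := μ.setIntegral_comp_smul_of_pos (fun x => ‖x‖ ^ γ) (Metric.ball 0 1) hR
  simp only [smul_unitBall_of_pos hR, norm_smul, Real.norm_of_nonneg hR.le,
    Real.mul_rpow hR.le (norm_nonneg _), integral_const_mul, smul_eq_mul] at h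
  rw [Real.rpow_add hR, Real.rpow_natCast, mul_assoc, h]
  field_simp

theorem integrableOn_ball_norm_rpow [Nontrivial E] {γ : ℝ}
    (hγ : -(Module.finrank ℝ E : ℝ) < γ) (R : ℝ) :
    IntegrableOn (fun x => ‖x‖ ^ γ) (Metric.ball 0 R) μ := by
  refine integrableOn_ball_of_norm_le_rpow (C := 1) (α := -γ) Module.finrank_pos (by linarith)
    (ae_of_all _ fun x => ?_) (measurable_norm.pow_const γ).aestronglyMeasurable
  simp [abs_of_nonneg (Real.rpow_nonneg (norm_nonneg x) γ)]

theorem lintegral_ball_norm_sub_rpow [Nontrivial E] {γ : ℝ}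
    (hγ : -(Module.finrank ℝ E : ℝ) < γ) (v : E) {R : ℝ} (hR : 0 < R) :
    ∫⁻ w in Metric.ball v R, ENNReal.ofReal (‖v - w‖ ^ γ) ∂μ =
      ENNReal.ofReal (R ^ (Module.finrank ℝ E + γ) * ∫ x in Metric.ball 0 1, ‖x‖ ^ γ ∂μ) := by
  rw [setLIntegral_ball_comp_sub_left μ (fun u => ENNReal.ofReal (‖u‖ ^ γ)),
    ← setIntegral_ball_norm_rpow μ γ hR, ofReal_integral_eq_lintegral_ofReal
      (integrableOn_ball_norm_rpow μ hγ R) (ae_of_all _ fun x => by positivity)]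

end NormRpow

open Filter Topology

theorem tendsto_const_mul_rpow_nhdsGT_zero (A : ℝ) {a : ℝ} (ha : 0 < a) :
    Tendsto (fun ε : ℝ => A * ε ^ a) (𝓝[>] 0) (𝓝 0) := by
  simpa [Real.zero_rpow ha.ne'] using
    (((Real.continuous_rpow_const ha.le).tendsto 0).mono_left nhdsWithin_le_nhds).const_mul A

theorem exists_lt_one_forall_of_eventually_nhdsGT {P : ℝ → Prop} (h : ∀ᶠ ε in 𝓝[>] 0, P ε) :
    ∃ ε₀ : ℝ, 0 < ε₀ ∧ ε₀ < 1 ∧ ∀ ε, 0 < ε → ε < ε₀ → P ε := by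
  obtain ⟨ε₁, hε₁, hP⟩ := (nhdsGT_basis 0).eventually_iff.1 h
  exact ⟨min ε₁ (1 / 2), by positivity, by linarith [min_le_right ε₁ (1 / 2)],
    fun ε hε hεε₀ => hP ⟨hε, hεε₀.trans_le (min_le_left _ _)⟩⟩

section JapaneseBracket

theorem jap_pos (v : E3) : 0 < jap v := Real.sqrt_pos.2 (by positivity)

theorem one_le_jap (v : E3) : 1 ≤ jap v :=
  Real.one_le_sqrt.2 (by nlinarith [sq_nonneg ‖v‖])

theorem norm_le_jap (v : E3) : ‖v‖ ≤ jap v :=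
  Real.le_sqrt_of_sq_le (by linarith)

theorem jap_le_jap_add_norm_sub (v w : E3) : jap v ≤ jap w + ‖v - w‖ := by
  have hw : jap w ^ 2 = 1 + ‖w‖ ^ 2 := Real.sq_sqrt (by positivity)
  have htri : ‖v‖ ≤ ‖w‖ + ‖v - w‖ := norm_le_norm_add_norm_sub' v w
  refine (Real.sqrt_le_left (add_nonneg (jap_pos w).le (norm_nonneg _))).2 ?_
  nlinarith [mul_le_mul_of_nonneg_left (norm_le_jap w) (norm_nonneg (v - w)),
    mul_self_le_mul_self (norm_nonneg v) htri]

theorem continuous_jap : Continuous jap := by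
  unfold jap
  fun_prop

theorem integrable_jap_rpow_neg {p : ℝ} (hp : 3 < p) : Integrable fun w : E3 => jap w ^ (-p) := by
  have h : (fun w : E3 => jap w ^ (-p)) = fun w => (1 + ‖w‖ ^ 2) ^ (-p / 2) := by
    ext w
    rw [jap, Real.sqrt_eq_rpow, ← Real.rpow_mul (by positivity)]
    ring_nf
  rw [h]
  exact integrable_rpow_neg_one_add_norm_sq (by simpa using hp)

end JapaneseBracket

section Pointwise

variable {v w : E3} {γ k s ε : ℝ}

theorem jap_rpow_neg_le_of_norm_sub_lt (hk : 0 ≤ k) (hε : ε ≤ 1 / 2)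
    (hw : ‖v - w‖ < ε * jap v) : jap w ^ (-k) ≤ 2 ^ k * jap v ^ (-k) := by
  have hv := jap_pos v
  have hvw : jap v / 2 ≤ jap w := by
    nlinarith [jap_le_jap_add_norm_sub v w]
  calc jap w ^ (-k) ≤ (jap v / 2) ^ (-k) :=
        Real.rpow_le_rpow_of_nonpos (by positivity) hvw (by linarith)
    _ = 2 ^ k * jap v ^ (-k) := by
        rw [Real.div_rpow hv.le zero_le_two, Real.rpow_neg zero_le_two]
        field_simp

theorem norm_sub_rpow_mul_jap_rpow_neg_le (hs : 0 ≤ s) (hγs : γ ≤ s) (hε : 0 < ε)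
    (hε2 : ε ≤ 1 / 2) (hw : jap v / ε < ‖v - w‖) :
    ‖v - w‖ ^ γ * jap w ^ (-k) ≤ 2 ^ s * ε ^ (s - γ) * jap v ^ γ * jap w ^ (-(k - s)) := by
  set r := ‖v - w‖
  have hv := jap_pos v
  have hw0 := jap_pos w
  have hvr : jap v < ε * r := by rwa [div_lt_iff₀' hε] at hw
  have hr : 0 < r := by nlinarith
  have hwr : r / 2 ≤ jap w := by
    nlinarith [norm_sub_le v w, norm_le_jap v, norm_le_jap w,
      mul_le_mul_of_nonneg_right hε2 hr.le]
  have hws : jap w ^ (-s) ≤ 2 ^ s * r ^ (-s) := by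
    calc jap w ^ (-s) ≤ (r / 2) ^ (-s) :=
          Real.rpow_le_rpow_of_nonpos (by positivity) hwr (by linarith)
      _ = 2 ^ s * r ^ (-s) := by
          rw [Real.div_rpow hr.le zero_le_two, Real.rpow_neg zero_le_two]
          field_simp
  have hrγs : r ^ (γ - s) ≤ ε ^ (s - γ) * jap v ^ γ := by
    calc r ^ (γ - s) ≤ (jap v / ε) ^ (γ - s) :=
          Real.rpow_le_rpow_of_nonpos (by positivity) hw.le (by linarith)
      _ = ε ^ (s - γ) * jap v ^ (γ - s) := by
          rw [Real.div_rpow hv.le hε.le, ← neg_sub s γ, Real.rpow_neg hε.le]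
          field_simp
      _ ≤ ε ^ (s - γ) * jap v ^ γ := by
          gcongr
          exacts [one_le_jap v, by linarith]
  calc r ^ γ * jap w ^ (-k) = r ^ γ * jap w ^ (-s) * jap w ^ (-(k - s)) := by
        rw [mul_assoc, ← Real.rpow_add hw0]
        ring_nf
    _ ≤ r ^ γ * (2 ^ s * r ^ (-s)) * jap w ^ (-(k - s)) := by gcongr
    _ = 2 ^ s * r ^ (γ - s) * jap w ^ (-(k - s)) := by
        rw [Real.rpow_sub hr, Real.rpow_neg hr.le]
        ring
    _ ≤ 2 ^ s * (ε ^ (s - γ) * jap v ^ γ) * jap w ^ (-(k - s)) := by gcongr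
    _ = 2 ^ s * ε ^ (s - γ) * jap v ^ γ * jap w ^ (-(k - s)) := by ring

end Pointwise

section IntegralBounds

variable {γ k s ε : ℝ}

theorem lintegral_far_le (hs : 0 ≤ s) (hγs : γ ≤ s) (hsk : 3 < k - s) (hε : 0 < ε)
    (hε2 : ε ≤ 1 / 2) (v : E3) :
    ∫⁻ w in {w : E3 | jap v / ε < ‖v - w‖}, ENNReal.ofReal (‖v - w‖ ^ γ * jap w ^ (-k)) ≤
      ENNReal.ofReal (2 ^ s * (∫ w : E3, jap w ^ (-(k - s))) * ε ^ (s - γ) * jap v ^ γ) := by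
  set c := 2 ^ s * ε ^ (s - γ) * jap v ^ γ
  have hv := jap_pos v
  have hint : Integrable fun w : E3 => c * jap w ^ (-(k - s)) :=
    (integrable_jap_rpow_neg hsk).const_mul c
  have hnonneg : 0 ≤ᵐ[volume] fun w : E3 => c * jap w ^ (-(k - s)) :=
    ae_of_all _ fun w => by have := jap_pos w; positivity
  calc ∫⁻ w in {w : E3 | jap v / ε < ‖v - w‖}, ENNReal.ofReal (‖v - w‖ ^ γ * jap w ^ (-k))
      ≤ ∫⁻ w in {w : E3 | jap v / ε < ‖v - w‖}, ENNReal.ofReal (c * jap w ^ (-(k - s))) :=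
        setLIntegral_mono
          (measurable_const.mul (continuous_jap.measurable.pow_const _)).ennreal_ofReal fun w hw =>
          ENNReal.ofReal_le_ofReal (norm_sub_rpow_mul_jap_rpow_neg_le hs hγs hε hε2 hw)
    _ ≤ ∫⁻ w, ENNReal.ofReal (c * jap w ^ (-(k - s))) := setLIntegral_le_lintegral _ _
    _ = ENNReal.ofReal (c * ∫ w : E3, jap w ^ (-(k - s))) := by
        rw [← ofReal_integral_eq_lintegral_ofReal hint hnonneg, integral_const_mul]
    _ = ENNReal.ofReal (2 ^ s * (∫ w : E3, jap w ^ (-(k - s))) * ε ^ (s - γ) * jap v ^ γ) := by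
        simp only [c]
        ring_nf

theorem lintegral_near_le (hγ : -3 < γ) (hk : 3 ≤ k) (hε : 0 < ε) (hε2 : ε ≤ 1 / 2)
    (v : E3) :
    ∫⁻ w in {w : E3 | ‖v - w‖ < ε * jap v}, ENNReal.ofReal (‖v - w‖ ^ γ * jap w ^ (-k)) ≤
      ENNReal.ofReal
        (2 ^ k * (∫ u in Metric.ball (0 : E3) 1, ‖u‖ ^ γ) * ε ^ (3 + γ) * jap v ^ γ) := by
  set c := 2 ^ k * jap v ^ (-k)
  set R := ε * jap v
  set J := ∫ u in Metric.ball (0 : E3) 1, ‖u‖ ^ γ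
  have hv := jap_pos v
  have hJ : 0 ≤ J := setIntegral_nonneg Metric.isOpen_ball.measurableSet fun u _ => by positivity
  have hball : {w : E3 | ‖v - w‖ < R} = Metric.ball v R := by
    ext w
    simp [dist_eq_norm, norm_sub_rev]
  have hscale : c * (R ^ (3 + γ) * J) ≤ 2 ^ k * J * ε ^ (3 + γ) * jap v ^ γ := by
    calc c * (R ^ (3 + γ) * J) = 2 ^ k * J * ε ^ (3 + γ) * jap v ^ (3 + γ - k) := by
          rw [Real.mul_rpow hε.le hv.le, show 3 + γ - k = -k + (3 + γ) by ring,
            Real.rpow_add hv (-k) (3 + γ)]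
          ring
      _ ≤ 2 ^ k * J * ε ^ (3 + γ) * jap v ^ γ := by
          gcongr
          exacts [one_le_jap v, by linarith]
  calc ∫⁻ w in {w : E3 | ‖v - w‖ < R}, ENNReal.ofReal (‖v - w‖ ^ γ * jap w ^ (-k))
      ≤ ∫⁻ w in Metric.ball v R, ENNReal.ofReal c * ENNReal.ofReal (‖v - w‖ ^ γ) := by
        rw [hball]
        refine setLIntegral_mono (by fun_prop) fun w hw => ?_
        rw [← ENNReal.ofReal_mul (by positivity), mul_comm c]
        have hmem : ‖v - w‖ < R := by simpa [dist_eq_norm, norm_sub_rev] using hw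
        exact ENNReal.ofReal_le_ofReal <| mul_le_mul_of_nonneg_left
          (jap_rpow_neg_le_of_norm_sub_lt (by linarith) hε2 hmem) (by positivity)
    _ = ENNReal.ofReal (c * (R ^ (3 + γ) * J)) := by
        rw [lintegral_const_mul _ (by fun_prop), lintegral_ball_norm_sub_rpow volume
          (by simpa using hγ) v (by positivity), finrank_euclideanSpace_fin, Nat.cast_ofNat,
          ← ENNReal.ofReal_mul (by positivity)]
    _ ≤ ENNReal.ofReal (2 ^ k * J * ε ^ (3 + γ) * jap v ^ γ) := ENNReal.ofReal_le_ofReal hscale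

theorem lintegral_far_or_near_le (hγ : -3 < γ) (hs : 0 ≤ s) (hγs : γ ≤ s) (hsk : 3 < k - s)
    (hε : 0 < ε) (hε2 : ε ≤ 1 / 2) (v : E3) :
    ∫⁻ w in {w : E3 | jap v / ε < ‖v - w‖ ∨ ‖v - w‖ < ε * jap v},
        ENNReal.ofReal (‖v - w‖ ^ γ * jap w ^ (-k)) ≤
      ENNReal.ofReal ((2 ^ s * (∫ w : E3, jap w ^ (-(k - s))) * ε ^ (s - γ) +
        2 ^ k * (∫ u in Metric.ball (0 : E3) 1, ‖u‖ ^ γ) * ε ^ (3 + γ)) * jap v ^ γ) := by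
  have hvγ : 0 ≤ jap v ^ γ := Real.rpow_nonneg (jap_pos v).le γ
  have hI : 0 ≤ ∫ w : E3, jap w ^ (-(k - s)) :=
    integral_nonneg fun w => Real.rpow_nonneg (jap_pos w).le _
  have hJ : 0 ≤ ∫ u in Metric.ball (0 : E3) 1, ‖u‖ ^ γ :=
    setIntegral_nonneg Metric.isOpen_ball.measurableSet fun u _ => by positivity
  rw [Set.ofPred_or, add_mul, ENNReal.ofReal_add
    (mul_nonneg (mul_nonneg (mul_nonneg (by positivity) hI) (by positivity)) hvγ)
    (mul_nonneg (mul_nonneg (mul_nonneg (by positivity) hJ) (by positivity)) hvγ)]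
  exact (lintegral_union_le _ _ _).trans
    (add_le_add (lintegral_far_le hs hγs hsk hε hε2 v)
      (lintegral_near_le hγ (by linarith) hε hε2 v))

end IntegralBounds

theorem stmt14_general (γ k : ℝ) (hγ1 : -3 < γ) (hk : max 3 (3 + γ) < k) :
    ∀ η : ℝ, 0 < η → ∃ ε₀ : ℝ, 0 < ε₀ ∧ ε₀ < 1 ∧
      ∀ ε : ℝ, 0 < ε → ε < ε₀ → ∀ v : E3,
        (∫⁻ w in {w : E3 | jap v / ε < ‖v - w‖ ∨ ‖v - w‖ < ε * jap v},
            ENNReal.ofReal (‖v - w‖ ^ γ * jap w ^ (-k))) ≤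
          ENNReal.ofReal (η * jap v ^ γ) := by
  intro η hη
  obtain ⟨hk3, hγk⟩ := max_lt_iff.1 hk
  obtain ⟨s, hs0, hγs, hsk⟩ : ∃ s, 0 ≤ s ∧ γ < s ∧ 3 < k - s :=
    ⟨(max γ 0 + (k - 3)) / 2, by cases max_cases γ 0 <;> refine ⟨?_, ?_, ?_⟩ <;> linarith⟩
  set A := 2 ^ s * ∫ w : E3, jap w ^ (-(k - s))
  set B := 2 ^ k * ∫ u in Metric.ball (0 : E3) 1, ‖u‖ ^ γ
  have hsmall : ∀ᶠ ε in 𝓝[>] 0, ε ≤ 1 / 2 ∧ A * ε ^ (s - γ) + B * ε ^ (3 + γ) < η := by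
    have hlim := (tendsto_const_mul_rpow_nhdsGT_zero A (sub_pos.2 hγs)).add
      (tendsto_const_mul_rpow_nhdsGT_zero B (by linarith : (0 : ℝ) < 3 + γ))
    rw [add_zero] at hlim
    exact ((eventually_le_nhds (by norm_num)).filter_mono nhdsWithin_le_nhds).and
      (hlim.eventually_lt_const hη)
  obtain ⟨ε₀, hε₀, hε₀1, hP⟩ := exists_lt_one_forall_of_eventually_nhdsGT hsmall
  refine ⟨ε₀, hε₀, hε₀1, fun ε hε hεε₀ v => ?_⟩
  obtain ⟨hε2, hηε⟩ := hP ε hε hεε₀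
  exact (lintegral_far_or_near_le hγ1 hs0 hγs.le hsk hε hε2 v).trans <| ENNReal.ofReal_le_ofReal <|
    mul_le_mul_of_nonneg_right hηε.le (Real.rpow_nonneg (jap_pos v).le γ)

/-- smallness of the kernel integral over far/near annular regions. -/
theorem stmt14 (γ k : ℝ) (hγ1 : -3 < γ) (hγ2 : γ ≤ 1) (hk : max 3 (3 + γ) < k) :
    ∀ η : ℝ, 0 < η → ∃ ε₀ : ℝ, 0 < ε₀ ∧ ε₀ < 1 ∧
      ∀ ε : ℝ, 0 < ε → ε < ε₀ → ∀ v : E3,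
        (∫⁻ w in {w : E3 | jap v / ε < ‖v - w‖ ∨ ‖v - w‖ < ε * jap v},
            ENNReal.ofReal (‖v - w‖ ^ γ * jap w ^ (-k))) ≤
          ENNReal.ofReal (η * jap v ^ γ) :=
  stmt14_general γ k hγ1 hk

end
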